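/- arXiv:2312.05121 — 6 statements merged into one kernel-verified Lean document; each statement's English description precedes it below -/
import Mathlib

section
/- For the polynomial g(t) = (t+1) t^2 (t+1/2)^2 (t^2-1/36)(t^2-1/9)(t-1/2)^2, one has g(1) = 35/36, and the zeroth Gegenbauer coefficient of g for dimension n = 48 equals 1/53913600, so that g(1)/g_0 = 52416000. -/
open Polynomial Finset
open scoped Classical

/-- Gegenbauer polynomials for dimension `n`, normalized by `P_i(1) = 1`. -/
noncomputable def gegen (n : ℕ) : ℕ → Polynomial ℝ
  | 0 => 1
  | 1 => X
  | (i + 2) =>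
      Polynomial.C (((n : ℝ) + i - 1)⁻¹) *
        (Polynomial.C ((n : ℝ) + 2 * i) * X * gegen n (i + 1) -
          Polynomial.C ((i : ℝ) + 1) * gegen n i)

/-- The `i`-th moment of a code. -/
noncomputable def moment (n i : ℕ) (A : Finset (EuclideanSpace ℝ (Fin n))) : ℝ :=
  ∑ x ∈ A, ∑ y ∈ A, (gegen n i).eval (inner ℝ x y : ℝ)

/-- A spherical code: a finite set of unit vectors. -/
def onSphere {n : ℕ} (A : Finset (EuclideanSpace ℝ (Fin n))) : Prop :=
  ∀ x ∈ A, ‖x‖ = 1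

/-- A spherical `τ`-design, characterized by vanishing of the first `τ` moments. -/
def isDesign (n τ : ℕ) (A : Finset (EuclideanSpace ℝ (Fin n))) : Prop :=
  ∀ i, 1 ≤ i → i ≤ τ → moment n i A = 0

/-- The zeroth Gegenbauer coefficient of a polynomial in dimension `n`:
its average against the weight `(1-t^2)^((n-3)/2)` on `[-1,1]`. -/
noncomputable def coeff0 (n : ℕ) (f : Polynomial ℝ) : ℝ :=
  (∫ t in (-1 : ℝ)..1, f.eval t * (1 - t ^ 2) ^ (((n : ℝ) - 3) / 2)) /
  (∫ t in (-1 : ℝ)..1, (1 - t ^ 2) ^ (((n : ℝ) - 3) / 2))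

noncomputable def hpoly : Polynomial ℝ :=
  (X + 1) ^ 2 * X ^ 2 * (X + Polynomial.C (1 / 2)) ^ 2 *
    (X ^ 2 - Polynomial.C (1 / 36)) * (X ^ 2 - Polynomial.C (1 / 9)) *
    (X - Polynomial.C (1 / 2))

noncomputable def gpoly : Polynomial ℝ :=
  (X + 1) * X ^ 2 * (X + Polynomial.C (1 / 2)) ^ 2 *
    (X ^ 2 - Polynomial.C (1 / 36)) * (X ^ 2 - Polynomial.C (1 / 9)) *
    (X - Polynomial.C (1 / 2)) ^ 2

noncomputable def upoly : Polynomial ℝ :=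
  (X + 1) * X ^ 2 * (X ^ 2 - Polynomial.C (1 / 36)) ^ 2 *
    (X ^ 2 - Polynomial.C (1 / 9)) * (X ^ 2 - Polynomial.C (1 / 4))

/-!
Substituting `t = cos θ` turns the weight `(1 - t²)^(45/2) dt` into `sin^46 θ dθ` on `[0, π]`.
Since `g(t) = (1 + t) E(t²)` with `E(u) = u (u - 1/4)² (u - 1/36) (u - 1/9)`, the odd part
`t E(t²)` contributes nothing, and `E(cos² θ) = E(1 - sin² θ)` is a polynomial in `sin² θ`.
Wallis' reduction `∫ sin^(k+2) = (k+1)/(k+2) ∫ sin^k` then makes the numerator an explicit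
rational multiple of the denominator `∫ sin^46`.
-/

open Real intervalIntegral

lemma integral_mul_one_sub_sq_rpow_eq_integral_cos_mul_sin_pow {f : ℝ → ℝ} (hf : Continuous f)
    (m : ℕ) :
    ∫ t in (-1 : ℝ)..1, f t * (1 - t ^ 2) ^ ((m : ℝ) / 2) =
      ∫ x in 0..π, f (cos x) * sin x ^ (m + 1) := by
  set F : ℝ → ℝ := fun t ↦ f t * (1 - t ^ 2) ^ ((m : ℝ) / 2)
  have hF : Continuous F :=
    hf.mul <| (by fun_prop : Continuous fun t : ℝ ↦ 1 - t ^ 2).rpow_const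
      fun _ ↦ Or.inr (by positivity)
  have hsubst := integral_deriv_smul_comp (a := 0) (b := π) (f' := fun x ↦ -sin x)
    (fun x _ ↦ hasDerivAt_cos x) (by fun_prop) hF
  simp only [cos_zero, cos_pi, smul_eq_mul, Function.comp_def, neg_mul, integral_neg] at hsubst
  rw [integral_symm, ← hsubst, neg_neg]
  refine integral_congr fun x hx ↦ ?_
  rw [Set.uIcc_of_le pi_pos.le] at hx
  have hsin : 0 ≤ sin x := sin_nonneg_of_nonneg_of_le_pi hx.1 hx.2
  have hpow : (1 - cos x ^ 2) ^ ((m : ℝ) / 2) = sin x ^ m := by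
    rw [← sin_sq, ← rpow_natCast (sin x) 2, ← rpow_mul hsin, ← rpow_natCast]
    congr 1
    push_cast
    ring
  simp only [F, hpow]
  ring

lemma coeff0_add_three (m : ℕ) (p : ℝ[X]) :
    coeff0 (m + 3) p =
      (∫ x in 0..π, p.eval (cos x) * sin x ^ (m + 1)) / ∫ x in 0..π, sin x ^ (m + 1) := by
  have hm : ((m + 3 : ℕ) : ℝ) - 3 = m := by push_cast; ring
  have hden :=
    integral_mul_one_sub_sq_rpow_eq_integral_cos_mul_sin_pow (f := fun _ ↦ 1) continuous_const m
  simp only [one_mul] at hden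
  rw [coeff0, hm, hden, integral_mul_one_sub_sq_rpow_eq_integral_cos_mul_sin_pow p.continuous]

-- `x ↦ π - x` fixes `sin` and negates `cos`.
lemma integral_cos_mul_comp_sin_eq_zero (H : ℝ → ℝ) : ∫ x in 0..π, cos x * H (sin x) = 0 := by
  have h := integral_comp_sub_left (fun x ↦ cos x * H (sin x)) (a := 0) (b := π) π
  simp only [cos_pi_sub, sin_pi_sub, sub_zero, sub_self, neg_mul, integral_neg] at h
  linarith

lemma integral_sin_pow_add_two (n : ℕ) :
    ∫ x in 0..π, sin x ^ (n + 2) = (n + 1) / (n + 2) * ∫ x in 0..π, sin x ^ n := by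
  simp [integral_sin_pow]

lemma integral_sin_pow_add_two_mul (n k : ℕ) :
    ∫ x in 0..π, sin x ^ (n + 2 * k) =
      (∏ i ∈ range k, ((n + 2 * i + 1 : ℝ) / (n + 2 * i + 2))) * ∫ x in 0..π, sin x ^ n := by
  induction k with
  | zero => simp
  | succ k ih =>
    rw [mul_add_one, ← add_assoc, integral_sin_pow_add_two, ih, prod_range_succ]
    push_cast
    ring

noncomputable def gpolyEven (u : ℝ) : ℝ := u * (u - 1 / 4) ^ 2 * (u - 1 / 36) * (u - 1 / 9)

lemma gpoly_eval_eq (t : ℝ) : gpoly.eval t = (1 + t) * gpolyEven (t ^ 2) := by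
  simp only [gpoly, gpolyEven, eval_mul, eval_pow, eval_add, eval_sub, eval_X, eval_C, eval_one]
  ring

noncomputable def gpolyEvenSinCoeff : Fin 6 → ℝ :=
  ![35 / 72, -4889 / 1728, 34015 / 5184, -9823 / 1296, 157 / 36, -1]

lemma gpolyEven_one_sub_sq_mul_pow (s : ℝ) :
    gpolyEven (1 - s ^ 2) * s ^ 46 = ∑ k, gpolyEvenSinCoeff k * s ^ (46 + 2 * (k : ℕ)) := by
  simp only [gpolyEven, gpolyEvenSinCoeff, Fin.sum_univ_succ, Fin.sum_univ_zero,
    Matrix.cons_val_zero, Matrix.cons_val_succ, Fin.val_zero, Fin.val_succ]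
  ring

lemma integral_gpolyEven_one_sub_sin_sq_mul_sin_pow :
    ∫ x in 0..π, gpolyEven (1 - sin x ^ 2) * sin x ^ 46 =
      1 / 53913600 * ∫ x in 0..π, sin x ^ 46 := by
  simp only [gpolyEven_one_sub_sq_mul_pow]
  rw [integral_finsetSum fun k _ ↦ (by fun_prop : Continuous _).intervalIntegrable _ _]
  simp only [integral_const_mul, integral_sin_pow_add_two_mul, ← mul_assoc, ← sum_mul]
  congr 1
  norm_num [gpolyEvenSinCoeff, Fin.sum_univ_succ, prod_range_succ]

lemma coeff0_gpoly : coeff0 48 gpoly = 1 / 53913600 := by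
  set H : ℝ → ℝ := fun s ↦ gpolyEven (1 - s ^ 2) * s ^ 46
  have hsin : Continuous fun x ↦ H (sin x) := by simp only [H, gpolyEven]; fun_prop
  have hcos : Continuous fun x ↦ cos x * H (sin x) := continuous_cos.mul hsin
  have hsplit : ∀ x, gpoly.eval (cos x) * sin x ^ (45 + 1) = H (sin x) + cos x * H (sin x) := by
    intro x
    rw [gpoly_eval_eq, cos_sq']
    ring
  rw [show 48 = 45 + 3 from rfl, coeff0_add_three, funext hsplit,
    integral_add (hsin.intervalIntegrable _ _) (hcos.intervalIntegrable _ _),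
    integral_cos_mul_comp_sin_eq_zero, add_zero, integral_gpolyEven_one_sub_sin_sq_mul_sin_pow,
    mul_div_assoc, div_self (integral_sin_pow_pos 46).ne', mul_one]

theorem stmt4 : gpoly.eval 1 = 35 / 36 ∧ coeff0 48 gpoly = 1 / 53913600 ∧
    gpoly.eval 1 / coeff0 48 gpoly = 52416000 := by
  have hg1 : gpoly.eval 1 = 35 / 36 := by
    rw [gpoly_eval_eq]
    norm_num [gpolyEven]
  exact ⟨hg1, coeff0_gpoly, by rw [hg1, coeff0_gpoly]; norm_num⟩
end

section
/- For the polynomial u(t) = (t+1) t^2 (t^2-1/36)^2 (t^2-1/9)(t^2-1/4), one has u(1) = 1225/972, and the zeroth Gegenbauer coefficient of u for dimension n = 48 equals 7/291133440, so that u(1)/u_0 = 52416000. -/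
open Polynomial Finset
open scoped Classical

/-! The moments `m_k = ∫_{-1}^1 t^k (1-t^2)^e dt` of the Gegenbauer weight vanish for odd `k` by
symmetry, and integrating `d/dt [t^(k+1) (1-t^2)^(e+1)]` over `[-1,1]` gives
`(k + 2e + 3) m_(k+2) = (k + 1) m_k`. Hence, for `e = (n-3)/2`, the zeroth coefficient of
`∑ c_k t^k` is `∑_{k even} c_k ∏_{j < k/2} (2j+1)/(2j+n)`, a rational number that for `u` and
`n = 48` evaluates to `7/291133440`. -/

open MeasureTheory

noncomputable def weightMoment (e : ℝ) (k : ℕ) : ℝ :=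
  ∫ t in (-1 : ℝ)..1, t ^ k * (1 - t ^ 2) ^ e

section WeightMoment

variable {e : ℝ}

lemma intervalIntegrable_pow_mul_weight (he : 0 ≤ e) (k : ℕ) :
    IntervalIntegrable (fun t : ℝ => t ^ k * (1 - t ^ 2) ^ e) volume (-1) 1 :=
  ((continuous_pow k).mul ((by fun_prop : Continuous fun t : ℝ => 1 - t ^ 2).rpow_const
    fun _ => Or.inr he)).intervalIntegrable _ _

lemma weightMoment_zero_pos (he : 0 ≤ e) : 0 < weightMoment e 0 := by
  refine intervalIntegral.intervalIntegral_pos_of_pos_on (intervalIntegrable_pow_mul_weight he 0)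
    (fun t ht => ?_) (by norm_num)
  have : 0 < 1 - t ^ 2 := by nlinarith [ht.1, ht.2]
  simpa using Real.rpow_pos_of_pos this e

lemma weightMoment_odd (e : ℝ) (m : ℕ) : weightMoment e (2 * m + 1) = 0 := by
  have h := intervalIntegral.integral_comp_neg (a := -1) (b := 1)
    fun t : ℝ => t ^ (2 * m + 1) * (1 - t ^ 2) ^ e
  simp only [Odd.neg_pow ⟨m, rfl⟩, neg_sq, neg_mul, intervalIntegral.integral_neg, neg_neg] at h
  unfold weightMoment
  linarith

lemma weightMoment_add_two (he : 0 ≤ e) (k : ℕ) :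
    (k + 2 * e + 3) * weightMoment e (k + 2) = (k + 1) * weightMoment e k := by
  have hw : ∀ t : ℝ, (1 - t ^ 2) ^ (e + 1) = (1 - t ^ 2) ^ e * (1 - t ^ 2) := fun t => by
    rcases eq_or_ne (1 - t ^ 2) 0 with h | h
    · simp [h, Real.zero_rpow (by linarith : e + 1 ≠ 0)]
    · exact Real.rpow_add_one h e
  have hderiv : ∀ t : ℝ, HasDerivAt (fun t : ℝ => t ^ (k + 1) * (1 - t ^ 2) ^ (e + 1))
      ((k + 1) * (t ^ k * (1 - t ^ 2) ^ e) - (k + 2 * e + 3) * (t ^ (k + 2) * (1 - t ^ 2) ^ e))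
      t := fun t => by
    have hbase : HasDerivAt (fun t : ℝ => 1 - t ^ 2) (-(2 * t)) t := by
      simpa using (hasDerivAt_pow 2 t).const_sub 1
    have hpow := (hasDerivAt_pow (k + 1) t).mul
      ((Real.hasDerivAt_rpow_const (p := e + 1) (Or.inr (by linarith))).comp t hbase)
    refine hpow.congr_deriv ?_
    simp only [Function.comp_apply, add_sub_cancel_right, Nat.add_sub_cancel, hw, Nat.cast_add,
      Nat.cast_one]
    ring
  have hint := intervalIntegrable_pow_mul_weight he
  have hFTC := intervalIntegral.integral_eq_sub_of_hasDerivAt (fun t _ => hderiv t)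
    (((hint k).const_mul _).sub ((hint (k + 2)).const_mul _))
  rw [intervalIntegral.integral_sub ((hint k).const_mul _) ((hint (k + 2)).const_mul _),
    intervalIntegral.integral_const_mul, intervalIntegral.integral_const_mul] at hFTC
  norm_num [Real.zero_rpow (by linarith : e + 1 ≠ 0)] at hFTC
  unfold weightMoment
  linarith

lemma weightMoment_even (he : 0 ≤ e) (m : ℕ) :
    weightMoment e (2 * m) =
      weightMoment e 0 * ∏ j ∈ range m, (2 * j + 1) / (2 * j + 2 * e + 3) := by
  induction m with
  | zero => simp
  | succ m ih =>
    have hrec := weightMoment_add_two he (2 * m)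
    have hpos : (0 : ℝ) < 2 * m + 2 * e + 3 := by positivity
    rw [prod_range_succ, ← mul_assoc, ← ih, mul_add_one, mul_div_assoc', eq_div_iff hpos.ne']
    push_cast at hrec
    linarith

lemma weightMoment_div_weightMoment_zero (he : 0 ≤ e) (k : ℕ) :
    weightMoment e k / weightMoment e 0 =
      if Even k then ∏ j ∈ range (k / 2), (2 * j + 1) / (2 * j + 2 * e + 3) else 0 := by
  obtain ⟨m, rfl | rfl⟩ := Nat.even_or_odd' k
  · rw [if_pos (even_two_mul m), Nat.mul_div_cancel_left m two_pos, weightMoment_even he,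
      mul_div_cancel_left₀ _ (weightMoment_zero_pos he).ne']
  · rw [if_neg (Nat.not_even_iff_odd.mpr (odd_two_mul_add_one m)), weightMoment_odd, zero_div]

lemma integral_eval_mul_weight {N : ℕ} (he : 0 ≤ e) (p : ℝ[X]) (c : Fin N → ℝ)
    (hp : ∀ t, p.eval t = ∑ i, c i * t ^ (i : ℕ)) :
    ∫ t in (-1 : ℝ)..1, p.eval t * (1 - t ^ 2) ^ e = ∑ i, c i * weightMoment e i := by
  simp_rw [hp, sum_mul, mul_assoc]
  rw [intervalIntegral.integral_finsetSum
    fun (i : Fin N) _ => (intervalIntegrable_pow_mul_weight he i).const_mul (c i)]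
  simp only [intervalIntegral.integral_const_mul, weightMoment]

end WeightMoment

lemma coeff0_eq_sum {n N : ℕ} (hn : 3 ≤ n) (p : ℝ[X]) (c : Fin N → ℝ)
    (hp : ∀ t, p.eval t = ∑ i, c i * t ^ (i : ℕ)) :
    coeff0 n p = ∑ i, c i * if Even (i : ℕ) then
      ∏ j ∈ range ((i : ℕ) / 2), (2 * j + 1) / (2 * j + n : ℝ) else 0 := by
  have he : 0 ≤ ((n : ℝ) - 3) / 2 := by
    have : (3 : ℝ) ≤ n := by exact_mod_cast hn
    linarith
  have hden : ∫ t in (-1 : ℝ)..1, (1 - t ^ 2) ^ (((n : ℝ) - 3) / 2) =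
      weightMoment (((n : ℝ) - 3) / 2) 0 := by
    simp [weightMoment]
  have hexp : ∀ j : ℝ, 2 * j + 2 * (((n : ℝ) - 3) / 2) + 3 = 2 * j + n := fun j => by ring
  simp_rw [coeff0, integral_eval_mul_weight he p c hp, hden, sum_div, mul_div_assoc,
    weightMoment_div_weightMoment_zero he, hexp]

theorem stmt5 : upoly.eval 1 = 1225 / 972 ∧ coeff0 48 upoly = 7 / 291133440 ∧
    upoly.eval 1 / coeff0 48 upoly = 52416000 := by
  have hcoeffs : ∀ t, upoly.eval t = ∑ i : Fin 12,
      ![0, 0, 1 / 46656, 1 / 46656, -85 / 46656, -85 / 46656, 7 / 144, 7 / 144, -5 / 12, -5 / 12,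
        1, 1] i * t ^ (i : ℕ) := fun t => by
    simp only [upoly, eval_mul, eval_add, eval_pow, eval_sub, eval_X, eval_C, eval_one,
      Fin.sum_univ_succ, Fin.sum_univ_zero, Matrix.cons_val_zero, Matrix.cons_val_succ,
      Fin.val_zero, Fin.val_succ]
    ring
  have hone : upoly.eval 1 = 1225 / 972 := by
    norm_num [upoly]
  have hcoeff0 : coeff0 48 upoly = 7 / 291133440 := by
    rw [coeff0_eq_sum (by norm_num) upoly _ hcoeffs]
    norm_num [Fin.sum_univ_succ, prod_range_succ]
  exact ⟨hone, hcoeff0, by rw [hone, hcoeff0]; norm_num⟩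
end

section
/- For the polynomial h(t) = (t+1)^2 t^2 (t+1/2)^2 (t^2-1/36)(t^2-1/9)(t-1/2), the zeroth Gegenbauer coefficient in dimension 48 equals h_0 = 1/13478400, and h(1)/h_0 = 52416000. -/
open Polynomial Finset
open scoped Classical

/-!
The weight `(1 - t²)^a` is even, so odd moments vanish, and integrating the derivative of
`t^(k+1) (1 - t²)^(a+1)` over `[-1, 1]` gives the recurrence
`(k + 2a + 3) M_{k+2} = (k + 1) M_k` for the moments `M_k = ∫ t^k (1 - t²)^a`.
Expanding `hpoly` in monomials, its zeroth Gegenbauer coefficient in dimension 48 (`a = 45/2`)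
is therefore a rational combination of `M_0, M_2, …, M_10`, each a rational multiple of `M_0`.
-/

section WeightedMoment

noncomputable def weightedMoment (a : ℝ) (k : ℕ) : ℝ :=
  ∫ t in (-1 : ℝ)..1, t ^ k * (1 - t ^ 2) ^ a

theorem weightedMoment_odd (a : ℝ) (k : ℕ) : weightedMoment a (2 * k + 1) = 0 := by
  have h := intervalIntegral.integral_comp_neg
    (a := -1) (b := 1) fun t : ℝ => t ^ (2 * k + 1) * (1 - t ^ 2) ^ a
  simp only [neg_neg, Odd.neg_pow (odd_two_mul_add_one k), even_two, Even.neg_pow, neg_mul,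
    intervalIntegral.integral_neg] at h
  rw [weightedMoment]
  linarith

variable {a : ℝ}

theorem continuous_one_sub_sq_rpow (ha : 0 ≤ a) : Continuous fun t : ℝ => (1 - t ^ 2) ^ a :=
  (continuous_const.sub (continuous_pow 2)).rpow_const fun _ => Or.inr ha

theorem intervalIntegrable_pow_mul_one_sub_sq_rpow (ha : 0 ≤ a) (k : ℕ) :
    IntervalIntegrable (fun t : ℝ => t ^ k * (1 - t ^ 2) ^ a) MeasureTheory.volume (-1) 1 :=
  ((continuous_pow k).mul (continuous_one_sub_sq_rpow ha)).intervalIntegrable _ _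

theorem weightedMoment_zero_pos (ha : 0 ≤ a) : 0 < weightedMoment a 0 := by
  refine intervalIntegral.intervalIntegral_pos_of_pos_on
    (intervalIntegrable_pow_mul_one_sub_sq_rpow ha 0) (fun t ht => ?_) (by norm_num)
  have : 0 < 1 - t ^ 2 := by nlinarith [ht.1, ht.2]
  simpa using Real.rpow_pos_of_pos this a

theorem weightedMoment_add_two (ha : 0 ≤ a) (k : ℕ) :
    (k + 2 * a + 3) * weightedMoment a (k + 2) = (k + 1) * weightedMoment a k := by
  set F : ℝ → ℝ := fun t => t ^ (k + 1) * (1 - t ^ 2) ^ (a + 1)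
  set F' : ℝ → ℝ := fun t =>
    (k + 1) * (t ^ k * (1 - t ^ 2) ^ a) - (k + 2 * a + 3) * (t ^ (k + 2) * (1 - t ^ 2) ^ a)
  have hderiv : ∀ t ∈ Set.uIcc (-1 : ℝ) 1, HasDerivAt F (F' t) t := by
    intro t ht
    rw [Set.uIcc_of_le (by norm_num)] at ht
    have hsq : HasDerivAt (fun s : ℝ => 1 - s ^ 2) (-(2 * t)) t := by
      simpa using (hasDerivAt_pow 2 t).const_sub 1
    have hsplit : (1 - t ^ 2) ^ (a + 1) = (1 - t ^ 2) * (1 - t ^ 2) ^ a := by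
      rw [Real.rpow_add_one' (by nlinarith [ht.1, ht.2]) (by linarith), mul_comm]
    refine ((hasDerivAt_pow (k + 1) t).mul
      (hsq.rpow_const (p := a + 1) (Or.inr (by linarith)))).congr_deriv ?_
    simp only [F', add_sub_cancel_right, hsplit]
    push_cast
    ring
  have hint : IntervalIntegrable F' MeasureTheory.volume (-1) 1 :=
    ((intervalIntegrable_pow_mul_one_sub_sq_rpow ha k).const_mul _).sub
      ((intervalIntegrable_pow_mul_one_sub_sq_rpow ha (k + 2)).const_mul _)
  have hzero : ∫ t in (-1 : ℝ)..1, F' t = 0 := by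
    rw [intervalIntegral.integral_eq_sub_of_hasDerivAt hderiv hint]
    simp [F, Real.zero_rpow (by linarith : a + 1 ≠ 0)]
  rw [intervalIntegral.integral_sub
    ((intervalIntegrable_pow_mul_one_sub_sq_rpow ha k).const_mul _)
    ((intervalIntegrable_pow_mul_one_sub_sq_rpow ha (k + 2)).const_mul _),
    intervalIntegral.integral_const_mul, intervalIntegral.integral_const_mul] at hzero
  rw [weightedMoment, weightedMoment]
  linarith

theorem integral_mul_one_sub_sq_rpow_of_eq_sum (ha : 0 ≤ a) {n : ℕ} {f : ℝ → ℝ}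
    (c : ℕ → ℝ) (hf : ∀ t, f t = ∑ i ∈ Finset.range n, c i * t ^ i) :
    ∫ t in (-1 : ℝ)..1, f t * (1 - t ^ 2) ^ a =
      ∑ i ∈ Finset.range n, c i * weightedMoment a i := by
  simp_rw [hf, Finset.sum_mul, mul_assoc]
  rw [intervalIntegral.integral_finsetSum fun i _ =>
    (intervalIntegrable_pow_mul_one_sub_sq_rpow ha i).const_mul (c i)]
  simp only [intervalIntegral.integral_const_mul, weightedMoment]

end WeightedMoment

theorem coeff0_eq_div_weightedMoment (n : ℕ) (f : Polynomial ℝ) :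
    coeff0 n f = (∫ t in (-1 : ℝ)..1, f.eval t * (1 - t ^ 2) ^ (((n : ℝ) - 3) / 2)) /
      weightedMoment (((n : ℝ) - 3) / 2) 0 := by
  simp [coeff0, weightedMoment]

theorem hpoly_eval_eq_sum (t : ℝ) :
    hpoly.eval t = ∑ i ∈ Finset.range 12,
      [0, 0, -1/2592, -1/648, 11/648, 97/1296, -259/2592, -959/1296, -17/36, 29/18, 5/2, 1].getD
        i 0 * t ^ i := by
  simp only [hpoly, Finset.sum_range_succ, Finset.sum_range_zero, List.getD_cons_succ,
    List.getD_cons_zero, eval_mul, eval_add, eval_sub, eval_pow, eval_X, eval_C, eval_one]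
  norm_num
  ring

theorem integral_hpoly_mul_one_sub_sq_rpow :
    ∫ t in (-1 : ℝ)..1, hpoly.eval t * (1 - t ^ 2) ^ ((45 : ℝ) / 2) =
      weightedMoment (45 / 2) 0 / 13478400 := by
  have ha : (0 : ℝ) ≤ 45 / 2 := by norm_num
  have h3 := weightedMoment_odd (45 / 2) 1
  have h5 := weightedMoment_odd (45 / 2) 2
  have h7 := weightedMoment_odd (45 / 2) 3
  have h9 := weightedMoment_odd (45 / 2) 4
  have h11 := weightedMoment_odd (45 / 2) 5
  have h2 := weightedMoment_add_two ha 0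
  have h4 := weightedMoment_add_two ha 2
  have h6 := weightedMoment_add_two ha 4
  have h8 := weightedMoment_add_two ha 6
  have h10 := weightedMoment_add_two ha 8
  norm_num at h2 h3 h4 h5 h6 h7 h8 h9 h10 h11
  rw [integral_mul_one_sub_sq_rpow_of_eq_sum ha _ hpoly_eval_eq_sum]
  simp only [Finset.sum_range_succ, Finset.sum_range_zero, List.getD_cons_succ,
    List.getD_cons_zero]
  norm_num [h3, h5, h7, h9, h11]
  linarith

theorem stmt6 : coeff0 48 hpoly = 1 / 13478400 ∧
    hpoly.eval 1 / coeff0 48 hpoly = 52416000 := by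
  have hc : coeff0 48 hpoly = 1 / 13478400 := by
    rw [coeff0_eq_div_weightedMoment, show ((48 : ℕ) - 3 : ℝ) / 2 = 45 / 2 by norm_num,
      integral_hpoly_mul_one_sub_sq_rpow]
    field_simp [(weightedMoment_zero_pos (by norm_num : (0 : ℝ) ≤ 45 / 2)).ne']
  have heval : hpoly.eval 1 = 35 / 9 := by
    simp only [hpoly, eval_mul, eval_add, eval_sub, eval_pow, eval_X, eval_C, eval_one]
    norm_num
  refine ⟨hc, ?_⟩
  rw [hc, heval]
  norm_num
end

section
/- In the expansion h(t) = Σ_{i=0}^{11} h_i P_i^{(48)}(t) of h(t) = (t+1)^2 t^2 (t+1/2)^2 (t^2-1/36)(t^2-1/9)(t-1/2) in Gegenbauer polynomials for dimension 48, all even-index coefficients h_0, h_2, h_4, h_6, h_8, h_10 are strictly positive. -/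
open Polynomial Finset
open scoped Classical

/-! The Gegenbauer polynomial `P_i` has degree exactly `i`: along the recurrence its leading
coefficient gets multiplied by `(n + 2i) / (n + i - 1) > 0`. Hence the coefficients of an expansion
in `P_0, …, P_11` are unique, and they can be read off from an explicit expansion of `h`, obtained
by computing `P_0, …, P_11` from the recurrence. -/

namespace Polynomial

variable {R : Type*}

theorem eq_zero_of_sum_C_mul_eq_zero [Semiring R] [NoZeroDivisors R] {p : ℕ → R[X]}
    (hp : ∀ i, (p i).degree = i) {a : ℕ → R} {N : ℕ}
    (h : ∑ i ∈ range N, C (a i) * p i = 0) : ∀ i < N, a i = 0 := by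
  induction N with
  | zero => simp
  | succ N ih =>
    rw [sum_range_succ] at h
    have hlow : ∀ i ∈ range N, (C (a i) * p i).coeff N = 0 := fun i hi => by
      rw [coeff_C_mul, coeff_eq_zero_of_degree_lt (by rw [hp i]; exact_mod_cast mem_range.mp hi),
        mul_zero]
    have hN : a N = 0 := by
      have htop := congrArg (coeff · N) h
      rw [coeff_add, finsetSum_coeff, sum_eq_zero hlow, zero_add, coeff_C_mul, coeff_zero] at htop
      exact (mul_eq_zero.mp htop).resolve_right (coeff_ne_zero_of_eq_degree (hp N))
    rw [hN, C_0, zero_mul, add_zero] at h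
    intro i hi
    rcases Nat.lt_succ_iff_lt_or_eq.mp hi with hi | rfl
    · exact ih h i hi
    · exact hN

theorem eq_of_sum_C_mul_eq_sum_C_mul [Ring R] [NoZeroDivisors R] {p : ℕ → R[X]}
    (hp : ∀ i, (p i).degree = i) {a b : ℕ → R} {N : ℕ}
    (h : ∑ i ∈ range N, C (a i) * p i = ∑ i ∈ range N, C (b i) * p i) :
    ∀ i < N, a i = b i := by
  have hsub := eq_zero_of_sum_C_mul_eq_zero hp (a := a - b) (N := N)
    (by simp only [Pi.sub_apply, C_sub, sub_mul, sum_sub_distrib, h, sub_self])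
  exact fun i hi => sub_eq_zero.mp (hsub i hi)

end Polynomial

theorem gegen_add_two (n i : ℕ) : gegen n (i + 2) =
    C (((n : ℝ) + i - 1)⁻¹) *
      (C ((n : ℝ) + 2 * i) * X * gegen n (i + 1) - C ((i : ℝ) + 1) * gegen n i) := by
  rw [gegen]

theorem natDegree_gegen_le_and_coeff_pos {n : ℕ} (hn : 2 ≤ n) (i : ℕ) :
    (gegen n i).natDegree ≤ i ∧ 0 < (gegen n i).coeff i := by
  induction i using Nat.twoStepInduction with
  | zero => simp [gegen]
  | one => simp [gegen]
  | more i ih₀ ih₁ =>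
    obtain ⟨hdeg₀, -⟩ := ih₀
    obtain ⟨hdeg₁, hpos₁⟩ := ih₁
    have hα : 0 < ((n : ℝ) + i - 1)⁻¹ := by
      have : (2 : ℝ) ≤ n := by exact_mod_cast hn
      exact inv_pos.mpr (by linarith [i.cast_nonneg (α := ℝ)])
    rw [gegen_add_two]
    constructor
    · refine (natDegree_C_mul_le _ _).trans ((natDegree_sub_le _ _).trans (max_le ?_ ?_))
      · rw [mul_assoc]
        have := natDegree_X_le (R := ℝ)
        exact (natDegree_C_mul_le _ _).trans (natDegree_mul_le.trans (by omega))
      · exact (natDegree_C_mul_le _ _).trans (by omega)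
    · have hvanish : (gegen n i).coeff (i + 2) = 0 := coeff_eq_zero_of_natDegree_lt (by omega)
      rw [mul_assoc, coeff_C_mul, coeff_sub, coeff_C_mul, coeff_C_mul, coeff_X_mul, hvanish,
        mul_zero, sub_zero]
      positivity

theorem degree_gegen {n : ℕ} (hn : 2 ≤ n) (i : ℕ) : (gegen n i).degree = i := by
  obtain ⟨hle, hpos⟩ := natDegree_gegen_le_and_coeff_pos hn i
  exact degree_eq_of_le_of_coeff_ne_zero (degree_le_of_natDegree_le hle) hpos.ne'

theorem eval_gegen_zero (n : ℕ) (t : ℝ) : (gegen n 0).eval t = 1 := by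
  simp [gegen]

theorem eval_gegen_one (n : ℕ) (t : ℝ) : (gegen n 1).eval t = t := by
  simp [gegen]

theorem eval_gegen_add_two (n i : ℕ) (t : ℝ) : (gegen n (i + 2)).eval t =
    ((n + 2 * i) * t * (gegen n (i + 1)).eval t - (i + 1) * (gegen n i).eval t) / (n + i - 1) := by
  rw [gegen_add_two]
  simp only [eval_mul, eval_sub, eval_C, eval_X]
  ring

theorem eval_gegen48_2 (t : ℝ) :
    (gegen 48 2).eval t = (48 * t ^ 2 - 1) / 47 := by
  rw [eval_gegen_add_two, eval_gegen_one 48, eval_gegen_zero 48]; push_cast; ring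

theorem eval_gegen48_3 (t : ℝ) :
    (gegen 48 3).eval t = (50 * t ^ 3 - 3 * t) / 47 := by
  rw [eval_gegen_add_two, eval_gegen48_2, eval_gegen_one 48]; push_cast; ring

theorem eval_gegen48_4 (t : ℝ) :
    (gegen 48 4).eval t = (2600 * t ^ 4 - 300 * t ^ 2 + 3) / 2303 := by
  rw [eval_gegen_add_two, eval_gegen48_3, eval_gegen48_2]; push_cast; ring

theorem eval_gegen48_5 (t : ℝ) :
    (gegen 48 5).eval t = (2808 * t ^ 5 - 520 * t ^ 3 + 15 * t) / 2303 := by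
  rw [eval_gegen_add_two, eval_gegen48_4, eval_gegen48_3]; push_cast; ring

theorem eval_gegen48_6 (t : ℝ) :
    (gegen 48 6).eval t = (52416 * t ^ 6 - 14040 * t ^ 4 + 780 * t ^ 2 - 5) / 39151 := by
  rw [eval_gegen_add_two, eval_gegen48_5, eval_gegen48_4]; push_cast; ring

theorem eval_gegen48_7 (t : ℝ) :
    (gegen 48 7).eval t = (8352 * t ^ 7 - 3024 * t ^ 5 + 270 * t ^ 3 - 5 * t) / 5593 := by
  rw [eval_gegen_add_two, eval_gegen48_6, eval_gegen48_5]; push_cast; ring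

theorem eval_gegen48_8 (t : ℝ) :
    (gegen 48 8).eval t =
      (501120 * t ^ 8 - 233856 * t ^ 6 + 30240 * t ^ 4 - 1080 * t ^ 2 + 5) /
        296429 := by
  rw [eval_gegen_add_two, eval_gegen48_7, eval_gegen48_6]; push_cast; ring

theorem eval_gegen48_9 (t : ℝ) :
    (gegen 48 9).eval t =
      (575360 * t ^ 9 - 334080 * t ^ 7 + 58464 * t ^ 5 - 3360 * t ^ 3 + 45 * t) /
        296429 := by
  rw [eval_gegen_add_two, eval_gegen48_8, eval_gegen48_7]; push_cast; ring

theorem eval_gegen48_10 (t : ℝ) :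
    (gegen 48 10).eval t =
      (7364608 * t ^ 10 - 5178240 * t ^ 8 + 1169280 * t ^ 6 - 97440 * t ^ 4 + 2520 * t ^ 2 - 9) /
        3260719 := by
  rw [eval_gegen_add_two, eval_gegen48_9, eval_gegen48_8]; push_cast; ring

theorem eval_gegen48_11 (t : ℝ) :
    (gegen 48 11).eval t =
      (5523456 * t ^ 11 - 4602880 * t ^ 9 + 1294560 * t ^ 7 - 146160 * t ^ 5 + 6090 * t ^ 3 - 63 * t) /
        2075003 := by
  rw [eval_gegen_add_two, eval_gegen48_10, eval_gegen48_9]; push_cast; ring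

noncomputable def hpolyGegenCoeff : ℕ → ℝ
  | 0 => 1/13478400
  | 1 => 3961/1758931200
  | 2 => 47/8794656
  | 3 => -118957/811814400
  | 4 => 122059/1563494400
  | 5 => 376856011/32716120320
  | 6 => 231656467/3008378880
  | 7 => 399983395/1342199808
  | 8 => 439011349/577290240
  | 9 => 3260719/2589120
  | 10 => 16303595/14729216
  | 11 => 2075003/5523456
  | _ => 0

theorem hpoly_eq_sum_gegen :
    hpoly = ∑ i ∈ range 12, C (hpolyGegenCoeff i) * gegen 48 i := by
  refine Polynomial.funext fun t => ?_
  simp only [hpoly, hpolyGegenCoeff, sum_range_succ, sum_range_zero, eval_zero, eval_add,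
    eval_sub, eval_mul, eval_pow, eval_C, eval_X, eval_one, eval_gegen_zero, eval_gegen_one,
    eval_gegen48_2, eval_gegen48_3, eval_gegen48_4, eval_gegen48_5, eval_gegen48_6,
    eval_gegen48_7, eval_gegen48_8, eval_gegen48_9, eval_gegen48_10, eval_gegen48_11]
  ring

theorem stmt7 (c : ℕ → ℝ)
    (hc : hpoly = ∑ i ∈ Finset.range 12, Polynomial.C (c i) * gegen 48 i) :
    0 < c 0 ∧ 0 < c 2 ∧ 0 < c 4 ∧ 0 < c 6 ∧ 0 < c 8 ∧ 0 < c 10 := by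
  have hcoeff : ∀ i < 12, c i = hpolyGegenCoeff i :=
    eq_of_sum_C_mul_eq_sum_C_mul (degree_gegen (by norm_num)) (hc.symm.trans hpoly_eq_sum_gegen)
  refine ⟨?_, ?_, ?_, ?_, ?_, ?_⟩ <;> rw [hcoeff _ (by norm_num)] <;> norm_num [hpolyGegenCoeff]
end

section
/- In the Gegenbauer expansion (dimension 48) of h(t) = (t+1)^2 t^2 (t+1/2)^2 (t^2-1/36)(t^2-1/9)(t-1/2), the coefficient h_3 equals -118957/811814400, and all coefficients h_i for i ≥ 4 are strictly positive. -/
/-!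
Since `gegen 48 i` has degree exactly `i`, the Gegenbauer polynomials are linearly independent,
so the coefficients of `hpoly` in this basis are unique. It therefore suffices to exhibit the
expansion with explicit rational coefficients and verify it as a polynomial identity.
-/

open Polynomial Finset
open scoped Classical

theorem linearIndependent_gegen {n : ℕ} (hn : 2 ≤ n) : LinearIndependent ℝ (gegen n) :=
  (⟨gegen n, degree_gegen hn⟩ : Polynomial.Sequence ℝ).linearIndependent

theorem eq_of_sum_C_mul_gegen_eq {n : ℕ} (hn : 2 ≤ n) {s : Finset ℕ} {c d : ℕ → ℝ}
    (h : ∑ i ∈ s, C (c i) * gegen n i = ∑ i ∈ s, C (d i) * gegen n i) :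
    ∀ i ∈ s, c i = d i := by
  have hzero : ∑ i ∈ s, (c - d) i • gegen n i = 0 := by
    simp only [Pi.sub_apply, sub_smul, sum_sub_distrib, smul_eq_C_mul, h, sub_self]
  exact fun i hi =>
    sub_eq_zero.mp (linearIndependent_iff'.mp (linearIndependent_gegen hn) s _ hzero i hi)

-- Obtained by back-substitution from the top degree down, using the leading coefficients of
-- `gegen 48 i`.
noncomputable def hpolyCoeff : ℕ → ℝ
  | 0 => 1 / 13478400
  | 1 => 3961 / 1758931200
  | 2 => 47 / 8794656
  | 3 => -118957 / 811814400
  | 4 => 122059 / 1563494400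
  | 5 => 376856011 / 32716120320
  | 6 => 231656467 / 3008378880
  | 7 => 399983395 / 1342199808
  | 8 => 439011349 / 577290240
  | 9 => 3260719 / 2589120
  | 10 => 16303595 / 14729216
  | 11 => 2075003 / 5523456
  | _ => 0

theorem hpoly_eq_sum_C_mul_gegen : hpoly = ∑ i ∈ range 12, C (hpolyCoeff i) * gegen 48 i := by
  refine Polynomial.funext fun t => ?_
  simp [hpoly, hpolyCoeff, gegen, sum_range_succ]
  ring

theorem stmt8 (c : ℕ → ℝ)
    (hc : hpoly = ∑ i ∈ Finset.range 12, Polynomial.C (c i) * gegen 48 i) :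
    c 3 = -(118957 / 811814400) ∧ ∀ i, 4 ≤ i → i ≤ 11 → 0 < c i := by
  have hcoeff : ∀ i ∈ range 12, c i = hpolyCoeff i :=
    eq_of_sum_C_mul_gegen_eq (by norm_num) (hc.symm.trans hpoly_eq_sum_C_mul_gegen)
  refine ⟨by rw [hcoeff 3 (by simp)]; norm_num [hpolyCoeff], fun i h4 h11 => ?_⟩
  rw [hcoeff i (mem_range.2 (by omega))]
  interval_cases i <;> norm_num [hpolyCoeff]
end

section
/- Suppose nonnegative reals A_{-1}, A_{±1/2}, A_{±1/3}, A_{±1/6}, A_0 satisfy, for k = 0,1,...,8, the equations 1 + Σ_t A_t t^k = f_k^{(0)} · N with N = 52416000, where f_k^{(0)} is the zeroth Gegenbauer coefficient (dimension 48) of t^k, and the sum is over t ∈ {-1,±1/2,±1/3,±1/6,0}. Then A_{-1} = 1, A_{1/2} = A_{-1/2} = 36848, A_{1/3} = A_{-1/3} = 1678887, A_{1/6} = A_{-1/6} = 12608784, A_0 = 23766960. -/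
open Polynomial Finset
open scoped Classical

/-
The moment equations split by parity. The odd ones only see `A₋₁` and the differences
`A_t - A_{-t}`, and form a nonsingular Vandermonde system in `t² ∈ {1, 1/4, 1/9, 1/36}`
(weighted by `t`); they force `A₋₁ = 1` and `A_t = A_{-t}`. The even ones for `k = 2, 4, 6` are
then a nonsingular Vandermonde system in `t² ∈ {1/4, 1/9, 1/36}` for the sums `A_t + A_{-t}`,
and `k = 0` gives `A₀`.
-/
theorem stmt17_general (Am1 Ah Amh A3 Am3 A6 Am6 A0 : ℝ)
    (h0 : 1 + (Am1 + Ah + Amh + A3 + Am3 + A6 + Am6 + A0) = 52416000)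
    (h1 : 1 + (-Am1 + Ah / 2 - Amh / 2 + A3 / 3 - Am3 / 3 + A6 / 6 - Am6 / 6) = 0)
    (h2 : 1 + (Am1 + Ah / 4 + Amh / 4 + A3 / 9 + Am3 / 9 + A6 / 36 + Am6 / 36) =
      (1 / 48) * 52416000)
    (h3 : 1 + (-Am1 + Ah / 8 - Amh / 8 + A3 / 27 - Am3 / 27 + A6 / 216 - Am6 / 216) = 0)
    (h4 : 1 + (Am1 + Ah / 16 + Amh / 16 + A3 / 81 + Am3 / 81 + A6 / 1296 + Am6 / 1296) =
      (3 / (48 * 50)) * 52416000)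
    (h5 : 1 + (-Am1 + Ah / 32 - Amh / 32 + A3 / 243 - Am3 / 243 + A6 / 7776 - Am6 / 7776) = 0)
    (h6 : 1 + (Am1 + Ah / 64 + Amh / 64 + A3 / 729 + Am3 / 729 + A6 / 46656 + Am6 / 46656) =
      (15 / (48 * 50 * 52)) * 52416000)
    (h7 : 1 + (-Am1 + Ah / 128 - Amh / 128 + A3 / 2187 - Am3 / 2187 + A6 / 279936 -
      Am6 / 279936) = 0) :
    Am1 = 1 ∧ Ah = 36848 ∧ Amh = 36848 ∧ A3 = 1678887 ∧ Am3 = 1678887 ∧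
      A6 = 12608784 ∧ Am6 = 12608784 ∧ A0 = 23766960 := by
  obtain ⟨hAm1, hdh, hd3, hd6⟩ :
      Am1 = 1 ∧ Ah - Amh = 0 ∧ A3 - Am3 = 0 ∧ A6 - Am6 = 0 := by
    refine ⟨?_, ?_, ?_, ?_⟩ <;> linarith only [h1, h3, h5, h7]
  obtain ⟨hsh, hs3, hs6⟩ :
      Ah + Amh = 73696 ∧ A3 + Am3 = 3357774 ∧ A6 + Am6 = 25217568 := by
    refine ⟨?_, ?_, ?_⟩ <;> linarith only [hAm1, h2, h4, h6]
  refine ⟨hAm1, ?_, ?_, ?_, ?_, ?_, ?_, ?_⟩ <;>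
    linarith only [hAm1, hdh, hd3, hd6, hsh, hs3, hs6, h0]

theorem stmt17 (Am1 Ah Amh A3 Am3 A6 Am6 A0 : ℝ)
    (hAm1 : 0 ≤ Am1) (hAh : 0 ≤ Ah) (hAmh : 0 ≤ Amh) (hA3 : 0 ≤ A3)
    (hAm3 : 0 ≤ Am3) (hA6 : 0 ≤ A6) (hAm6 : 0 ≤ Am6) (hA0 : 0 ≤ A0)
    (h0 : 1 + (Am1 + Ah + Amh + A3 + Am3 + A6 + Am6 + A0) = 52416000)
    (h1 : 1 + (-Am1 + Ah / 2 - Amh / 2 + A3 / 3 - Am3 / 3 + A6 / 6 - Am6 / 6) = 0)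
    (h2 : 1 + (Am1 + Ah / 4 + Amh / 4 + A3 / 9 + Am3 / 9 + A6 / 36 + Am6 / 36) =
      (1 / 48) * 52416000)
    (h3 : 1 + (-Am1 + Ah / 8 - Amh / 8 + A3 / 27 - Am3 / 27 + A6 / 216 - Am6 / 216) = 0)
    (h4 : 1 + (Am1 + Ah / 16 + Amh / 16 + A3 / 81 + Am3 / 81 + A6 / 1296 + Am6 / 1296) =
      (3 / (48 * 50)) * 52416000)
    (h5 : 1 + (-Am1 + Ah / 32 - Amh / 32 + A3 / 243 - Am3 / 243 + A6 / 7776 - Am6 / 7776) = 0)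
    (h6 : 1 + (Am1 + Ah / 64 + Amh / 64 + A3 / 729 + Am3 / 729 + A6 / 46656 + Am6 / 46656) =
      (15 / (48 * 50 * 52)) * 52416000)
    (h7 : 1 + (-Am1 + Ah / 128 - Amh / 128 + A3 / 2187 - Am3 / 2187 + A6 / 279936 -
      Am6 / 279936) = 0)
    (h8 : 1 + (Am1 + Ah / 256 + Amh / 256 + A3 / 6561 + Am3 / 6561 + A6 / 1679616 +
      Am6 / 1679616) = (105 / (48 * 50 * 52 * 54)) * 52416000) :
    Am1 = 1 ∧ Ah = 36848 ∧ Amh = 36848 ∧ A3 = 1678887 ∧ Am3 = 1678887 ∧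
      A6 = 12608784 ∧ Am6 = 12608784 ∧ A0 = 23766960 :=
  stmt17_general Am1 Ah Amh A3 Am3 A6 Am6 A0 h0 h1 h2 h3 h4 h5 h6 h7
end
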